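/- arXiv:2012.03765 — 3 statements merged into one kernel-verified Lean document; each statement's English description precedes it below -/
import Mathlib

section
/- (Theorem 1 for rNN) Let X be a metric space, c ≥ 2, r : ℝ, D a multiset over X × Fin c, and x : X. Let a := rNN_r(D,x), s_l := s_l(N_r(D,x)), and let b be the largest label among those l ≠ a attaining the maximum of s_l over l ≠ a. Then for every multiset D* over X × Fin c with S(D,D*) ≤ ⌈(s_a − s_b + 𝟙(b < a))/2⌉ − 1 (an inequality of integers), rNN_r(D*,x) = a. -/
/-!
Let `k = S(D, D*)`. All but at most `k` elements of `D*` lie in `D ∩ D*`, and likewise for `D`,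
so every vote count `s_l` of the neighbourhood moves by at most `k` and the margin of `a` over
any label shrinks by at most `2k`. The ceiling bound is exactly `2k < s_a - s_b + 𝟙(b < a)`.
When `b < a` this allows `2k = s_a - s_b`, an exact tie with `b`; `a` still beats every `l > a`
because `b` is the largest runner-up, so such an `l` trails `b` strictly.
-/

/-- Poisoning size between two multisets: `max (card A) (card B) - card (A ∩ B)`. -/
noncomputable def pSize {α : Type*} (A B : Multiset α) : ℕ :=
  haveI := Classical.decEq α
  max A.card B.card - (A ∩ B).card

/-- Number of votes for label `l` in a multiset of labeled examples (counted with
multiplicity). -/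
def votes {X : Type*} {c : ℕ} (T : Multiset (X × Fin c)) (l : Fin c) : ℕ :=
  T.countP (fun p => p.2 = l)

/-- Tie-broken majority label: the largest label (in the order of `Fin c`) among the
labels attaining the maximum vote count. -/
noncomputable def majLabel {X : Type*} {c : ℕ} (hc : 0 < c) (T : Multiset (X × Fin c)) :
    Fin c :=
  (Finset.univ.filter (fun l : Fin c => ∀ l', votes T l' ≤ votes T l)).max'
    (by
      haveI : NeZero c := ⟨hc.ne'⟩
      obtain ⟨b, -, hb⟩ := Finset.exists_max_image (Finset.univ : Finset (Fin c)) (votes T)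
        Finset.univ_nonempty
      exact ⟨b, Finset.mem_filter.mpr ⟨Finset.mem_univ b, fun l' => hb l' (Finset.mem_univ l')⟩⟩)

/-- The largest label, among those `l ≠ a`, attaining the maximum of `s l` over `l ≠ a`. -/
noncomputable def secondLabel {c : ℕ} (hc : 2 ≤ c) (s : Fin c → ℕ) (a : Fin c) : Fin c :=
  (Finset.univ.filter (fun l : Fin c => l ≠ a ∧ ∀ l', l' ≠ a → s l' ≤ s l)).max'
    (by
      have h1 : 1 < Fintype.card (Fin c) := by rw [Fintype.card_fin]; omega
      obtain ⟨l0, hl0⟩ := Fintype.exists_ne_of_one_lt_card h1 a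
      have hne : (Finset.univ.filter (fun l : Fin c => l ≠ a)).Nonempty :=
        ⟨l0, Finset.mem_filter.mpr ⟨Finset.mem_univ _, hl0⟩⟩
      obtain ⟨b, hb, hbmax⟩ := Finset.exists_max_image _ s hne
      refine ⟨b, Finset.mem_filter.mpr ⟨Finset.mem_univ _, (Finset.mem_filter.mp hb).2, ?_⟩⟩
      intro l' hl'
      exact hbmax l' (Finset.mem_filter.mpr ⟨Finset.mem_univ _, hl'⟩))

/-- rNN neighbor multiset: training examples within distance `r` of the test input `x`. -/
noncomputable def Nr {X : Type*} [MetricSpace X] {c : ℕ} (r : ℝ)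
    (D : Multiset (X × Fin c)) (x : X) : Multiset (X × Fin c) :=
  haveI : DecidablePred (fun p : X × Fin c => dist p.1 x ≤ r) := Classical.decPred _
  D.filter (fun p => dist p.1 x ≤ r)

/-- rNN prediction: tie-broken majority label among the rNN neighbors. -/
noncomputable def rNNpred {X : Type*} [MetricSpace X] {c : ℕ} (hc : 0 < c) (r : ℝ)
    (D : Multiset (X × Fin c)) (x : X) : Fin c :=
  majLabel hc (Nr r D x)

namespace Multiset

variable {α : Type*}

theorem pSize_comm (A B : Multiset α) : pSize A B = pSize B A := by
  classical
  simp only [pSize, max_comm A.card, inter_comm A]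

theorem countP_le_countP_add_pSize (p : α → Prop) [DecidablePred p] (A B : Multiset α) :
    A.countP p ≤ B.countP p + pSize A B := by
  classical
  have hE : A ∩ B ≤ A := inter_le_left
  have h_rest : A.countP p - (A ∩ B).countP p ≤ A.card - (A ∩ B).card := by
    rw [← countP_sub hE, ← card_sub hE]
    exact countP_le_card _ _
  have h_common : (A ∩ B).countP p ≤ B.countP p := countP_le_of_le _ inter_le_right
  have h_card : A.card - (A ∩ B).card ≤ pSize A B := by
    simp only [pSize]
    convert Nat.sub_le_sub_right (le_max_left A.card B.card) _
  have := countP_le_of_le p hE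
  omega

end Multiset

theorem votes_Nr_le_add_pSize {X : Type*} [MetricSpace X] {c : ℕ} (r : ℝ) (x : X)
    (A B : Multiset (X × Fin c)) (l : Fin c) :
    votes (Nr r A x) l ≤ votes (Nr r B x) l + pSize A B := by
  classical
  simp only [votes, Nr, Multiset.countP_filter]
  convert Multiset.countP_le_countP_add_pSize _ A B

theorem Int.two_mul_lt_of_le_ceil_half_sub_one {n e : ℤ} (h : n ≤ ⌈(e : ℚ) / 2⌉ - 1) :
    2 * n < e := by
  have : (n : ℚ) < e / 2 := Int.lt_ceil.mp (by omega)
  exact_mod_cast (by linarith : (2 * n : ℚ) < e)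

theorem majLabel_eq_of_forall_ne {X : Type*} {c : ℕ} (hc : 0 < c) (T : Multiset (X × Fin c))
    (a : Fin c) (h : ∀ l ≠ a, votes T l + (if a < l then 1 else 0) ≤ votes T a) :
    majLabel hc T = a := by
  apply le_antisymm
  · refine Finset.max'_le _ _ _ fun l hl => le_of_not_gt fun hal => ?_
    have := h l hal.ne'
    have := (Finset.mem_filter.mp hl).2 a
    simp only [hal, if_true] at *
    omega
  · refine Finset.le_max' _ _ (Finset.mem_filter.mpr ⟨Finset.mem_univ _, fun l => ?_⟩)
    rcases eq_or_ne l a with rfl | hla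
    · exact le_rfl
    · exact le_trans (Nat.le_add_right _ _) (h l hla)

theorem apply_add_ite_le_apply_secondLabel {c : ℕ} (hc : 2 ≤ c) (s : Fin c → ℕ) (a : Fin c) :
    ∀ l ≠ a, s l + (if secondLabel hc s a < l then 1 else 0) ≤ s (secondLabel hc s a) := by
  set S := Finset.univ.filter (fun l : Fin c => l ≠ a ∧ ∀ l', l' ≠ a → s l' ≤ s l)
  have hb : secondLabel hc s a ∈ S := Finset.max'_mem _ _
  intro l hla
  have hle := (Finset.mem_filter.mp hb).2.2 l hla
  split_ifs with hbl
  · refine lt_of_le_of_ne hle fun htie => hbl.not_ge (Finset.le_max' S l ?_)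
    exact Finset.mem_filter.mpr
      ⟨Finset.mem_univ _, hla, fun l' hl' => htie ▸ (Finset.mem_filter.mp hb).2.2 l' hl'⟩
  · exact hle

/-- Theorem 1 for rNN: if the poisoning size is at most
`⌈(s_a − s_b + 𝟙(b < a))/2⌉ − 1`, the rNN prediction for `x` is unchanged. -/
theorem rnn_certified_prediction {X : Type*} [MetricSpace X] {c : ℕ} (hc : 2 ≤ c) (r : ℝ)
    (D : Multiset (X × Fin c)) (x : X) (a b : Fin c)
    (hb : b = secondLabel hc (fun l => votes (Nr r D x) l) a)
    (Dstar : Multiset (X × Fin c))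
    (h : (pSize D Dstar : ℤ) ≤
      ⌈(((votes (Nr r D x) a : ℤ) - (votes (Nr r D x) b : ℤ) +
          if b < a then 1 else 0 : ℤ) : ℚ) / 2⌉ - 1) :
    rNNpred (by omega : 0 < c) r Dstar x = a := by
  have hgap := Int.two_mul_lt_of_le_ceil_half_sub_one h
  have hb_wins := hb ▸ apply_add_ite_le_apply_secondLabel hc (fun l => votes (Nr r D x) l) a
  refine majLabel_eq_of_forall_ne _ _ a fun l hla => ?_
  have hl_moved := votes_Nr_le_add_pSize r x Dstar D l
  have ha_moved := votes_Nr_le_add_pSize r x D Dstar a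
  rw [Multiset.pSize_comm] at hl_moved
  have hl_trails := hb_wins l hla
  split_ifs at hgap hl_trails ⊢ <;> omega
end

section
/- Let X be a metric space, c ≥ 2, k a natural number, ρ : X × Fin c → ℕ injective, D and D* multisets over X × Fin c, and x : X. Then for every label l ∈ Fin c, the vote counts among kNN neighbors satisfy s_l(N_k(D,x)) − S(D,D*) ≤ s_l(N_k(D*,x)) ≤ s_l(N_k(D,x)) + S(D,D*). -/
/-- The kNN ordering w.r.t. a test input `x`, with ties broken by the ranking `ρ`
(larger ranks first): `p` precedes `q` iff `dist p.1 x < dist q.1 x`, or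
`dist p.1 x = dist q.1 x` and `ρ p ≥ ρ q`. -/
def knnLE {X : Type*} [MetricSpace X] {c : ℕ} (ρ : X × Fin c → ℕ) (x : X)
    (p q : X × Fin c) : Prop :=
  dist p.1 x < dist q.1 x ∨ (dist p.1 x = dist q.1 x ∧ ρ q ≤ ρ p)

/-- kNN neighbor multiset: the first `min k (card D)` elements of `D` in the order
`knnLE ρ x` (sort `D` by this order and take the first `k`). -/
noncomputable def Nk {X : Type*} [MetricSpace X] {c : ℕ} {ρ : X × Fin c → ℕ}
    (hρ : Function.Injective ρ) (k : ℕ) (D : Multiset (X × Fin c)) (x : X) :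
    Multiset (X × Fin c) :=
  haveI : DecidableRel (knnLE ρ x) := Classical.decRel _
  haveI : IsTrans _ (knnLE ρ x) := ⟨by
    rintro p q s (h1 | ⟨h1, h1'⟩) (h2 | ⟨h2, h2'⟩)
    · exact Or.inl (h1.trans h2)
    · exact Or.inl (h1.trans_eq h2)
    · exact Or.inl (h1.trans_lt h2)
    · exact Or.inr ⟨h1.trans h2, h2'.trans h1'⟩⟩
  haveI : IsAntisymm _ (knnLE ρ x) := ⟨by
    rintro p q (h1 | ⟨h1, h1'⟩) (h2 | ⟨h2, h2'⟩)
    · exact absurd h2 (lt_asymm h1)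
    · exact absurd h2.symm h1.ne
    · exact absurd h1.symm h2.ne
    · exact hρ (le_antisymm h2' h1')⟩
  haveI : IsTotal _ (knnLE ρ x) := ⟨by
    intro p q
    rcases lt_trichotomy (dist p.1 x) (dist q.1 x) with h | h | h
    · exact Or.inl (Or.inl h)
    · rcases le_total (ρ q) (ρ p) with h' | h'
      · exact Or.inl (Or.inr ⟨h, h'⟩)
      · exact Or.inr (Or.inr ⟨h.symm, h'⟩)
    · exact Or.inr (Or.inl h)⟩
  (↑((D.sort (knnLE ρ x)).take k) : Multiset (X × Fin c))

/-! Sorting is monotone for sub-multisets: if `C ≤ D`, the sorted list of `C` is a sublist of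
the sorted list of `D`. So for `C = D ∩ D*` the `k` nearest neighbours in `D` are the `j₁`
nearest in `C` together with at most `|D| - |C|` further points, and similarly for `D*` with
some `j₂`. Passing between the two prefixes of `C` changes a vote count by at most `j₂ - j₁`,
and counting lengths bounds the total change by `max |D| |D*| - |C|`. -/

namespace List

variable {α : Type*}

theorem Sublist.exists_take_sublist_take {l₁ l₂ : List α} (h : l₁ <+ l₂) (k : ℕ) :
    ∃ j ≤ l₁.length, l₁.take j <+ l₂.take k ∧
      (l₂.take k).length - j ≤ l₂.length - l₁.length := by
  rw [← take_append_drop k l₂] at h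
  obtain ⟨a, b, rfl, ha, hb⟩ := sublist_append_iff.mp h
  have hlen := congrArg length (take_append_drop k l₂)
  simp only [length_append] at hlen ⊢
  refine ⟨a.length, by simp, by rwa [take_left], ?_⟩
  have := ha.length_le
  have := hb.length_le
  omega

theorem countP_take_le_countP_take_add (l : List α) (p : α → Bool) (i j : ℕ) :
    (l.take j).countP p ≤ (l.take i).countP p + (j - i) := by
  rcases le_total i j with hij | hji
  · have := (take_sublist_take_left hij (l := l)).le_countP p
    simp only [length_take] at this
    omega
  · exact ((take_sublist_take_left hji).countP_le).trans (Nat.le_add_right _ _)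

theorem countP_take_le_of_sublist_of_sublist {l l₁ l₂ : List α} (h₁ : l <+ l₁) (h₂ : l <+ l₂)
    (p : α → Bool) (k : ℕ) :
    (l₂.take k).countP p ≤ (l₁.take k).countP p + (max l₁.length l₂.length - l.length) := by
  obtain ⟨j₁, hj₁, hsub₁, hgap₁⟩ := h₁.exists_take_sublist_take k
  obtain ⟨j₂, hj₂, hsub₂, hgap₂⟩ := h₂.exists_take_sublist_take k
  have hlen₁ := hsub₁.length_le
  have hlen₂ := hsub₂.length_le
  have hcount₂ := hsub₂.le_countP p
  have hcount₁ := hsub₁.countP_le (p := p)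
  have hstep := l.countP_take_le_countP_take_add p j₁ j₂
  have hl₁ := h₁.length_le
  have hl₂ := h₂.length_le
  simp only [length_take] at *
  omega

end List

theorem pSize_eq {α : Type*} [DecidableEq α] (A B : Multiset α) :
    pSize A B = max A.card B.card - (A ∩ B).card := by
  unfold pSize
  congr
  exact Subsingleton.elim _ _

theorem pSize_comm {α : Type*} (A B : Multiset α) : pSize A B = pSize B A := by
  classical
  rw [pSize_eq, pSize_eq, max_comm, Multiset.inter_comm]

open scoped List

section Knn

variable {X : Type*} [MetricSpace X] {c : ℕ} {ρ : X × Fin c → ℕ} {x : X}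

instance : IsTrans (X × Fin c) (knnLE ρ x) := ⟨by
  rintro p q s (h₁ | ⟨h₁, h₁'⟩) (h₂ | ⟨h₂, h₂'⟩)
  · exact Or.inl (h₁.trans h₂)
  · exact Or.inl (h₁.trans_eq h₂)
  · exact Or.inl (h₁.trans_lt h₂)
  · exact Or.inr ⟨h₁.trans h₂, h₂'.trans h₁'⟩⟩

instance : Std.Total (knnLE ρ x) := ⟨by
  intro p q
  rcases lt_trichotomy (dist p.1 x) (dist q.1 x) with h | h | h
  · exact Or.inl (Or.inl h)
  · rcases le_total (ρ q) (ρ p) with h' | h'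
    · exact Or.inl (Or.inr ⟨h, h'⟩)
    · exact Or.inr (Or.inr ⟨h.symm, h'⟩)
  · exact Or.inr (Or.inl h)⟩

theorem knnLE_isAntisymm (hρ : Function.Injective ρ) : Std.Antisymm (knnLE ρ x) := ⟨by
  rintro p q (h₁ | ⟨h₁, h₁'⟩) (h₂ | ⟨h₂, h₂'⟩)
  · exact absurd h₂ (lt_asymm h₁)
  · exact absurd h₂.symm h₁.ne
  · exact absurd h₁.symm h₂.ne
  · exact hρ (le_antisymm h₂' h₁')⟩

noncomputable def knnSort (hρ : Function.Injective ρ) (x : X) (D : Multiset (X × Fin c)) :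
    List (X × Fin c) :=
  haveI := Classical.decRel (knnLE ρ x)
  have := knnLE_isAntisymm (x := x) hρ
  D.sort (knnLE ρ x)

variable (hρ : Function.Injective ρ)

theorem Nk_eq_take (k : ℕ) (D : Multiset (X × Fin c)) :
    Nk hρ k D x = ((knnSort hρ x D).take k : Multiset (X × Fin c)) :=
  rfl

theorem length_knnSort (D : Multiset (X × Fin c)) : (knnSort hρ x D).length = D.card := by
  classical
  have := knnLE_isAntisymm (x := x) hρ
  exact Multiset.length_sort _

theorem knnSort_sublist_knnSort {E F : Multiset (X × Fin c)} (h : E ≤ F) :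
    knnSort hρ x E <+ knnSort hρ x F := by
  classical
  have := knnLE_isAntisymm (x := x) hρ
  exact List.sublist_of_subperm_of_pairwise
    (by rw [← Multiset.coe_le, knnSort, knnSort, Multiset.sort_eq, Multiset.sort_eq]; exact h)
    (Multiset.pairwise_sort _ _) (Multiset.pairwise_sort _ _)

theorem votes_Nk_le_add_pSize (k : ℕ) (D Dstar : Multiset (X × Fin c)) (l : Fin c) :
    votes (Nk hρ k Dstar x) l ≤ votes (Nk hρ k D x) l + pSize D Dstar := by
  classical
  rw [pSize_eq]
  simp only [votes, Nk_eq_take, Multiset.coe_countP, ← length_knnSort hρ (x := x)]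
  exact List.countP_take_le_of_sublist_of_sublist
    (knnSort_sublist_knnSort hρ Multiset.inter_le_left)
    (knnSort_sublist_knnSort hρ Multiset.inter_le_right) _ k

end Knn

theorem knn_votes_stable_general {X : Type*} [MetricSpace X] {c : ℕ}
    (k : ℕ) {ρ : X × Fin c → ℕ} (hρ : Function.Injective ρ)
    (D Dstar : Multiset (X × Fin c)) (x : X) (l : Fin c) :
    (votes (Nk hρ k D x) l : ℤ) - (pSize D Dstar : ℤ) ≤ (votes (Nk hρ k Dstar x) l : ℤ) ∧
      (votes (Nk hρ k Dstar x) l : ℤ) ≤ (votes (Nk hρ k D x) l : ℤ) + (pSize D Dstar : ℤ) := by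
  have h₁ := votes_Nk_le_add_pSize hρ k D Dstar l (x := x)
  have h₂ := votes_Nk_le_add_pSize hρ k Dstar D l (x := x)
  rw [pSize_comm] at h₂
  omega

/-- each label's vote count among the kNN neighbors changes by at most the
poisoning size `S(D,D*)`. -/
theorem knn_votes_stable {X : Type*} [MetricSpace X] {c : ℕ} (hc : 2 ≤ c)
    (k : ℕ) {ρ : X × Fin c → ℕ} (hρ : Function.Injective ρ)
    (D Dstar : Multiset (X × Fin c)) (x : X) (l : Fin c) :
    (votes (Nk hρ k D x) l : ℤ) - (pSize D Dstar : ℤ) ≤ (votes (Nk hρ k Dstar x) l : ℤ) ∧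
      (votes (Nk hρ k Dstar x) l : ℤ) ≤ (votes (Nk hρ k D x) l : ℤ) + (pSize D Dstar : ℤ) :=
  knn_votes_stable_general k hρ D Dstar x l
end

section
/- (Theorem 4, joint certification for a testing dataset) Let X be a metric space, c ≥ 2, r : ℝ, D a multiset over X × Fin c, and e a natural number. Suppose a testing dataset of pairs (x,y) with x : X and y ∈ Fin c is partitioned into λ pairwise disjoint groups U_1,…,U_λ such that within each group U_j the rNN predicted labels rNN_r(D,x) of the testing inputs are pairwise distinct and the examples of U_j are ordered with nonincreasing values c_i := 𝟙(a_i = y_i) · max(s_{a_i}^{(i)} − s_{b_i}^{(i)} − e + 𝟙(b_i < a_i), 0), where for example i of the group a_i := rNN_r(D,x_i), s_l^{(i)} := s_l(N_r(D,x_i)), and b_i is the largest label among those l ≠ a_i attaining the maximum of s_l^{(i)} over l ≠ a_i. For each group U_j of size m_j, let w_j be the least w' with 1 ≤ w' ≤ m_j + 1 such that Σ_{i : w' ≤ i ≤ m_j} c_i ≤ e. Then for every multiset D* over X × Fin c with S(D,D*) ≤ e, the total number of testing examples (x,y) in the dataset with rNN_r(D*,x) = y is at least Σ_{j=1}^{λ}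 (w_j − 1). -/
set_option linter.unusedSectionVars false

lemma card_filter_ge {m : ℕ} (t : ℕ) :
    (Finset.univ.filter (fun i : Fin m => t ≤ (i : ℕ))).card = m - t := by
  rw [← Finset.card_image_of_injective _ Fin.val_injective]
  have himg : (Finset.univ.filter (fun i : Fin m => t ≤ (i : ℕ))).image Fin.val
      = Finset.Ico t m := by
    ext n
    simp only [Finset.mem_image, Finset.mem_filter, Finset.mem_univ, true_and, Finset.mem_Ico]
    constructor
    · rintro ⟨i, hi, rfl⟩; exact ⟨hi, i.isLt⟩
    · rintro ⟨h1, h2⟩; exact ⟨⟨n, h2⟩, h1, rfl⟩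
  rw [himg, Nat.card_Ico]

lemma tail_sum_le {m : ℕ} (cc : Fin m → ℕ) (hmono : Antitone cc) :
    ∀ (k : ℕ) (S : Finset (Fin m)) (t : ℕ), S.card = k → m ≤ t + k →
      ∑ i ∈ Finset.univ.filter (fun i : Fin m => t ≤ (i : ℕ)), cc i ≤ ∑ i ∈ S, cc i := by
  intro k
  induction k with
  | zero =>
    intro S t hcard hmt
    have hemp : Finset.univ.filter (fun i : Fin m => t ≤ (i : ℕ)) = ∅ := by
      ext i
      simp only [Finset.mem_filter, Finset.mem_univ, true_and, Finset.notMem_empty,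
        iff_false, not_le]
      have := i.isLt; omega
    simp [hemp]
  | succ k ih =>
    intro S t hcard hmt
    by_cases hmt2 : m ≤ t
    · have hemp : Finset.univ.filter (fun i : Fin m => t ≤ (i : ℕ)) = ∅ := by
        ext i
        simp only [Finset.mem_filter, Finset.mem_univ, true_and, Finset.notMem_empty,
          iff_false, not_le]
        have := i.isLt; omega
      simp [hemp]
    push_neg at hmt2
    have hne : S.Nonempty := Finset.card_pos.mp (by omega)
    set s0 := S.min' hne with hs0def
    have hs0 : s0 ∈ S := S.min'_mem hne
    have hS' : (S.erase s0).card = k := by rw [Finset.card_erase_of_mem hs0, hcard]; omega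
    have hsub : S ⊆ Finset.univ.filter (fun i : Fin m => (s0 : ℕ) ≤ (i : ℕ)) := by
      intro i hi
      simp only [Finset.mem_filter, Finset.mem_univ, true_and]
      exact_mod_cast S.min'_le i hi
    have hcard2 : k + 1 ≤ m - (s0 : ℕ) := by
      have h := Finset.card_le_card hsub
      rw [card_filter_ge] at h; omega
    have hs0t : (s0 : ℕ) ≤ t := by omega
    have hsplit : Finset.univ.filter (fun i : Fin m => t ≤ (i : ℕ))
        = insert (⟨t, hmt2⟩ : Fin m) (Finset.univ.filter (fun i : Fin m => t + 1 ≤ (i : ℕ))) := by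
      ext i
      simp only [Finset.mem_filter, Finset.mem_univ, true_and, Finset.mem_insert, Fin.ext_iff]
      omega
    have hnotmem : (⟨t, hmt2⟩ : Fin m) ∉ Finset.univ.filter (fun i : Fin m => t + 1 ≤ (i : ℕ)) := by
      simp
    rw [hsplit, Finset.sum_insert hnotmem]
    have hih := ih (S.erase s0) (t + 1) hS' (by omega)
    have hcc : cc ⟨t, hmt2⟩ ≤ cc s0 := hmono (by rw [Fin.le_def]; exact hs0t)
    have hsum : ∑ i ∈ S, cc i = cc s0 + ∑ i ∈ S.erase s0, cc i :=
      (Finset.add_sum_erase S cc hs0).symm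
    omega

lemma group_bound {m e : ℕ} (cc : Fin m → ℕ) (hmono : Antitone cc) (w : ℕ)
    (hw : IsLeast {w' : ℕ | 1 ≤ w' ∧ w' ≤ m + 1 ∧
      ∑ i ∈ Finset.univ.filter (fun i : Fin m => w' ≤ (i : ℕ) + 1), cc i ≤ e} w)
    (P : Fin m → Prop) [DecidablePred P]
    (hkey : ∑ i ∈ Finset.univ.filter (fun i => ¬ P i), cc i ≤ e) :
    w - 1 ≤ (Finset.univ.filter P).card := by
  obtain ⟨⟨hw1, hwm, _⟩, hleast⟩ := hw
  rcases Nat.lt_or_ge w 2 with h2 | h2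
  · omega
  by_contra hcon
  push_neg at hcon
  have htail : e < ∑ i ∈ Finset.univ.filter (fun i : Fin m => w - 1 ≤ (i : ℕ) + 1), cc i := by
    by_contra h
    push_neg at h
    have := hleast ⟨by omega, by omega, h⟩
    omega
  have hf : Finset.univ.filter (fun i : Fin m => w - 1 ≤ (i : ℕ) + 1)
      = Finset.univ.filter (fun i : Fin m => w - 2 ≤ (i : ℕ)) := by
    ext i
    simp only [Finset.mem_filter, Finset.mem_univ, true_and]
    omega
  rw [hf] at htail
  have hcards : (Finset.univ.filter P).card + (Finset.univ.filter (fun i => ¬ P i)).card = m := by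
    rw [Finset.card_filter_add_card_filter_not]
    simp
  have hts := tail_sum_le cc hmono (Finset.univ.filter (fun i => ¬ P i)).card
    (Finset.univ.filter (fun i => ¬ P i)) (w - 2) rfl (by omega)
  omega

lemma sum_countP_le {α ι : Type*} (M : Multiset α) (F : Finset ι) (p : ι → α → Prop)
    [∀ i, DecidablePred (p i)]
    (h : ∀ i ∈ F, ∀ k ∈ F, ∀ x, p i x → p k x → i = k) :
    ∑ i ∈ F, M.countP (p i) ≤ Multiset.card M := by
  classical
  induction F using Finset.cons_induction generalizing M with
  | empty => simp
  | cons j s hj ih =>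
    have hstep : ∀ i ∈ s, Multiset.countP (p i) M
        = Multiset.countP (p i) (M.filter (fun x => ¬ p j x)) := by
      intro i hi
      rw [Multiset.countP_filter]
      apply Multiset.countP_congr rfl
      intro x _
      have hij : i ≠ j := fun hh => hj (hh ▸ hi)
      have : p i x → ¬ p j x := fun h1 h2 =>
        hij (h i (Finset.mem_cons_of_mem hi) j (Finset.mem_cons_self j s) x h1 h2)
      simp only [eq_iff_iff]
      exact ⟨fun h1 => ⟨h1, this h1⟩, fun h1 => h1.1⟩
    have hihs := ih (M.filter (fun x => ¬ p j x)) (fun i hi k hk => h i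
      (Finset.mem_cons_of_mem hi) k (Finset.mem_cons_of_mem hk))
    have hcardsplit : Multiset.card (M.filter (p j))
        + Multiset.card (M.filter (fun x => ¬ p j x)) = Multiset.card M := by
      rw [← Multiset.card_add, Multiset.filter_add_not]
    rw [Finset.sum_cons, Finset.sum_congr rfl hstep]
    rw [Multiset.countP_eq_card_filter]
    omega

section Helpers

variable {X : Type*} [MetricSpace X] {c : ℕ}

lemma votes_add (T T' : Multiset (X × Fin c)) (l : Fin c) :
    votes (T + T') l = votes T l + votes T' l := Multiset.countP_add _ _ _

lemma Nr_add (r : ℝ) (A B : Multiset (X × Fin c)) (x : X) :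
    Nr r (A + B) x = Nr r A x + Nr r B x := by
  unfold Nr; exact Multiset.filter_add _ _ _

lemma votes_le_card (T : Multiset (X × Fin c)) (l : Fin c) :
    votes T l ≤ Multiset.card T := Multiset.countP_le_card _ _

lemma card_Nr_le (r : ℝ) (A : Multiset (X × Fin c)) (x : X) :
    Multiset.card (Nr r A x) ≤ Multiset.card A := by
  unfold Nr; exact Multiset.card_le_card (Multiset.filter_le _ _)

lemma majLabel_mem (hc : 0 < c) (T : Multiset (X × Fin c)) :
    majLabel hc T ∈ Finset.univ.filter (fun l : Fin c => ∀ l', votes T l' ≤ votes T l) := by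
  unfold majLabel; exact Finset.max'_mem _ _

lemma votes_le_majLabel (hc : 0 < c) (T : Multiset (X × Fin c)) (l : Fin c) :
    votes T l ≤ votes T (majLabel hc T) :=
  (Finset.mem_filter.mp (majLabel_mem hc T)).2 l

lemma le_majLabel {hc : 0 < c} {T : Multiset (X × Fin c)} {l : Fin c}
    (h : ∀ l', votes T l' ≤ votes T l) : l ≤ majLabel hc T := by
  unfold majLabel
  exact Finset.le_max' _ _ (Finset.mem_filter.mpr ⟨Finset.mem_univ _, h⟩)

lemma secondLabel_mem (hc : 2 ≤ c) (s : Fin c → ℕ) (a : Fin c) :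
    secondLabel hc s a ∈ Finset.univ.filter
      (fun l : Fin c => l ≠ a ∧ ∀ l', l' ≠ a → s l' ≤ s l) := by
  unfold secondLabel; exact Finset.max'_mem _ _

lemma le_secondLabel {hc : 2 ≤ c} {s : Fin c → ℕ} {a l : Fin c}
    (hl : l ≠ a) (h : ∀ l', l' ≠ a → s l' ≤ s l) : l ≤ secondLabel hc s a := by
  unfold secondLabel
  exact Finset.le_max' _ _ (Finset.mem_filter.mpr ⟨Finset.mem_univ _, hl, h⟩)

end Helpers

section Margin
variable {X : Type*} [MetricSpace X] {c : ℕ}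

lemma margin_bound (hc : 2 ≤ c) (h0 : 0 < c) (r : ℝ)
    (I Del Ins : Multiset (X × Fin c)) (x : X)
    (hflip : rNNpred h0 r (I + Ins) x ≠ rNNpred h0 r (I + Del) x) :
    (votes (Nr r (I + Del) x) (rNNpred h0 r (I + Del) x) : ℤ)
      - (votes (Nr r (I + Del) x) (secondLabel hc (fun l => votes (Nr r (I + Del) x) l)
          (rNNpred h0 r (I + Del) x)) : ℤ)
      + (if secondLabel hc (fun l => votes (Nr r (I + Del) x) l) (rNNpred h0 r (I + Del) x)
          < rNNpred h0 r (I + Del) x then (1 : ℤ) else 0)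
    ≤ (votes (Nr r Del x) (rNNpred h0 r (I + Del) x) : ℤ) + Multiset.card Ins := by
  set s : Fin c → ℕ := fun l => votes (Nr r (I + Del) x) l with hs
  set sstar : Fin c → ℕ := fun l => votes (Nr r (I + Ins) x) l with hsstar
  set a : Fin c := rNNpred h0 r (I + Del) x with hadef
  set a' : Fin c := rNNpred h0 r (I + Ins) x with ha'def
  set b : Fin c := secondLabel hc s a with hbdef
  have hsplitD : ∀ l, s l = votes (Nr r I x) l + votes (Nr r Del x) l := by
    intro l; show votes (Nr r (I + Del) x) l = _; rw [Nr_add, votes_add]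
  have hsplitS : ∀ l, sstar l = votes (Nr r I x) l + votes (Nr r Ins x) l := by
    intro l; show votes (Nr r (I + Ins) x) l = _; rw [Nr_add, votes_add]
  have hbspec := (Finset.mem_filter.mp (secondLabel_mem hc s a)).2
  have hbne : b ≠ a := hbspec.1
  have hbmax : ∀ l, l ≠ a → s l ≤ s b := hbspec.2
  have h1 : sstar a ≤ sstar a' := votes_le_majLabel h0 _ a
  have h2 : a' < a → sstar a < sstar a' := by
    intro hlt
    rcases lt_or_ge (sstar a) (sstar a') with h | h
    · exact h
    · exfalso
      have heq : ∀ l', sstar l' ≤ sstar a := by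
        intro l'; exact le_trans (votes_le_majLabel h0 _ l') h
      have : a ≤ a' := le_majLabel heq
      exact absurd hlt (not_lt.mpr this)
  have h3 : s a' ≤ s b := hbmax a' hflip
  have h4 : b < a → s a' = s b → a' < a := by
    intro hba hsa
    by_contra hcon
    push_neg at hcon
    have haa' : a < a' := lt_of_le_of_ne hcon (fun h => hflip h.symm)
    have : a' ≤ b := le_secondLabel hflip (by intro l' hl'; rw [hsa]; exact hbmax l' hl')
    exact absurd (lt_trans (lt_of_lt_of_le haa' this) hba) (lt_irrefl a)
  -- numeric facts
  have eA := hsplitD a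
  have eA' := hsplitD a'
  have fA := hsplitS a
  have fA' := hsplitS a'
  have hins : votes (Nr r Ins x) a' ≤ Multiset.card Ins :=
    le_trans (votes_le_card _ _) (card_Nr_le r Ins x)
  have hqa : votes (Nr r (I + Del) x) a = s a := rfl
  have hqb : votes (Nr r (I + Del) x) b = s b := rfl
  by_cases hba : b < a
  · by_cases haa : a' < a
    · have h2' := h2 haa
      simp only [hba, if_pos]
      have h3' : s a' ≤ s b := h3
      omega
    · have h5 : s a' + 1 ≤ s b := by
        rcases lt_or_eq_of_le h3 with h | h
        · omega
        · exact absurd (h4 hba h) haa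
      simp only [hba, if_pos]
      omega
  · simp only [hba, if_neg, not_false_iff]
    by_cases haa : a' < a
    · have h2' := h2 haa
      omega
    · omega
end Margin


/-- Theorem 4, joint certification for a testing dataset: a testing
dataset partitioned into `lam` pairwise disjoint groups (modeled by a disjoint family of
groups indexed by `Fin lam`), where within each group the rNN predicted labels are
pairwise distinct and the examples are ordered with nonincreasing values `c_i`. For any
poisoning of size at most `e`, the total number of correctly classified testing examples
is at least `∑_j (w_j − 1)`. -/
theorem rnn_joint_certification_dataset {X : Type*} [MetricSpace X] {c : ℕ} (hc : 2 ≤ c)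
    (r : ℝ) (D : Multiset (X × Fin c)) (e : ℕ) {lam : ℕ} (m : Fin lam → ℕ)
    (xs : ∀ j, Fin (m j) → X) (ys : ∀ j, Fin (m j) → Fin c)
    (a b : ∀ j, Fin (m j) → Fin c) (cc : ∀ j, Fin (m j) → ℕ)
    (ha : ∀ j i, a j i = rNNpred (by omega : 0 < c) r D (xs j i))
    (hdist : ∀ j, Function.Injective (a j))
    (hb : ∀ j i, b j i = secondLabel hc (fun l => votes (Nr r D (xs j i)) l) (a j i))
    (hcc : ∀ j i, (cc j i : ℤ) = (if a j i = ys j i then 1 else 0) *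
      max ((votes (Nr r D (xs j i)) (a j i) : ℤ) - (votes (Nr r D (xs j i)) (b j i) : ℤ) -
        (e : ℤ) + if b j i < a j i then 1 else 0) 0)
    (hmono : ∀ j, Antitone (cc j))
    (w : Fin lam → ℕ)
    (hw : ∀ j, IsLeast {w' : ℕ | 1 ≤ w' ∧ w' ≤ m j + 1 ∧
      ∑ i ∈ Finset.univ.filter (fun i : Fin (m j) => w' ≤ (i : ℕ) + 1), cc j i ≤ e} (w j))
    (Dstar : Multiset (X × Fin c)) (hD : pSize D Dstar ≤ e) :
    ∑ j, (w j - 1) ≤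
      ∑ j, (Finset.univ.filter
        (fun i => rNNpred (by omega : 0 < c) r Dstar (xs j i) = ys j i)).card := by
  classical
  have h0 : 0 < c := by omega
  have ha' : ∀ j i, a j i = rNNpred h0 r D (xs j i) := ha
  set I := @Inter.inter _ (@Multiset.instInter _ (Classical.decEq (X × Fin c))) D Dstar
    with hIdef
  have hID : I ≤ D := @Multiset.inter_le_left _ (Classical.decEq _) _ _
  have hIDs : I ≤ Dstar := @Multiset.inter_le_right _ (Classical.decEq _) _ _
  set Del := D - I with hDeldef
  set Ins := Dstar - I with hInsdef
  have hDeq : I + Del = D := by rw [hDeldef, add_comm]; exact tsub_add_cancel_of_le hID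
  have hDseq : I + Ins = Dstar := by rw [hInsdef, add_comm]; exact tsub_add_cancel_of_le hIDs
  have hcardI_D : Multiset.card I ≤ Multiset.card D := Multiset.card_le_card hID
  have hcardI_Ds : Multiset.card I ≤ Multiset.card Dstar := Multiset.card_le_card hIDs
  have hps : max (Multiset.card D) (Multiset.card Dstar) - Multiset.card I ≤ e := hD
  have hcDel : Multiset.card Del ≤ e := by
    rw [hDeldef, Multiset.card_sub hID]; omega
  have hcIns : Multiset.card Ins ≤ e := by
    rw [hInsdef, Multiset.card_sub hIDs]; omega
  refine Finset.sum_le_sum ?_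
  intro j _
  refine group_bound (cc j) (hmono j) (w j) (hw j)
    (fun i => rNNpred h0 r Dstar (xs j i) = ys j i) ?_
  -- key sum bound
  set Fneg := Finset.univ.filter
    (fun i : Fin (m j) => ¬ rNNpred h0 r Dstar (xs j i) = ys j i) with hFneg
  have perI : ∀ i ∈ Fneg, cc j i ≤ votes (Nr r Del (xs j i)) (a j i) := by
    intro i hi
    have hPneg : rNNpred h0 r Dstar (xs j i) ≠ ys j i := by
      have := Finset.mem_filter.mp hi
      exact this.2
    by_cases hay : a j i = ys j i
    · have hflip0 : rNNpred h0 r Dstar (xs j i) ≠ rNNpred h0 r D (xs j i) := by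
        rw [← ha' j i, hay]; exact hPneg
      rw [← hDeq, ← hDseq] at hflip0
      have hm := margin_bound hc h0 r I Del Ins (xs j i) hflip0
      rw [hDeq, ← ha' j i, ← hb j i] at hm
      have hccz := hcc j i
      rw [if_pos hay, one_mul] at hccz
      have hcast : (Multiset.card Ins : ℤ) ≤ (e : ℤ) := by exact_mod_cast hcIns
      have hz : (cc j i : ℤ) ≤ (votes (Nr r Del (xs j i)) (a j i) : ℤ) := by
        rw [hccz]
        refine max_le ?_ ?_
        · omega
        · exact Int.natCast_nonneg _
      exact_mod_cast hz
    · have hccz := hcc j i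
      rw [if_neg hay, zero_mul] at hccz
      have : cc j i = 0 := by exact_mod_cast hccz
      omega
  refine le_trans (Finset.sum_le_sum perI) (le_trans ?_ hcDel)
  have hrw : ∀ i ∈ Fneg, votes (Nr r Del (xs j i)) (a j i)
      = Del.countP (fun q => q.2 = a j i ∧ dist q.1 (xs j i) ≤ r) := by
    intro i _
    unfold votes Nr
    try rw [Multiset.countP_filter]
    try exact Multiset.countP_congr rfl (fun x _ => rfl)
  rw [Finset.sum_congr rfl hrw]
  refine sum_countP_le Del Fneg _ ?_
  rintro i _ k _ q ⟨h1, -⟩ ⟨h2, -⟩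
  exact hdist j (by rw [← h1, ← h2])
end
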